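/- Let f satisfy (H), be C² and convex with f' > 0, and suppose τ₋ := liminf_{t→∞} f(t)f''(t)/f'(t)² > 0. Then liminf_{t→∞} f'(t)F(t)/f(t)² ≥ 1/(2 − τ₋), which is strictly greater than 1/2. -/

import Mathlib

open Filter Set MeasureTheory intervalIntegral
open scoped Topology

/-!
With `φ := f² / f'` one has `φ' = f (2 - f f'' / f'²)`. Once `f f'' / f'² ≥ 2 - k`, this
gives `φ' ≤ k f = k F'`, hence `φ ≤ k F + C` and, as `F → ∞`,
`f' F / f² = F / φ ≥ F / (k F + C) → 1 / k`. Every `k > 2 - τ₋` is admissible, and letting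
`k` decrease to `2 - τ₋` gives the bound.
-/

lemma hasDerivAt_sq_div_deriv {f f' f'' : ℝ → ℝ} {x : ℝ} (hf : HasDerivAt f (f' x) x)
    (hf' : HasDerivAt f' (f'' x) x) (hx : f' x ≠ 0) :
    HasDerivAt (fun s => f s ^ 2 / f' s) (f x * (2 - f x * f'' x / f' x ^ 2)) x := by
  refine ((hf.pow 2).div hf' hx).congr_deriv ?_
  simp only [Pi.pow_apply, Nat.cast_ofNat, Nat.add_one_sub_one, pow_one]
  field_simp

lemma sub_le_mul_sub_of_hasDerivAt_le {φ φ' G g : ℝ → ℝ} {T k t : ℝ}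
    (hφ : ∀ s ≥ T, HasDerivAt φ (φ' s) s) (hG : ∀ s ≥ T, HasDerivAt G (g s) s)
    (hle : ∀ s ≥ T, φ' s ≤ k * g s) (ht : T ≤ t) :
    φ t - φ T ≤ k * (G t - G T) := by
  have hmono : MonotoneOn (fun s => k * G s - φ s) (Ici T) := by
    refine monotoneOn_of_hasDerivWithinAt_nonneg (f' := fun s => k * g s - φ' s) (convex_Ici T)
      (fun s hs => (((hG s hs).const_mul k).sub (hφ s hs)).continuousAt.continuousWithinAt)
      (fun s hs => ?_) (fun s hs => ?_)
    · rw [interior_Ici] at hs ⊢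
      exact (((hG s hs.le).const_mul k).sub (hφ s hs.le)).hasDerivWithinAt
    · rw [interior_Ici] at hs
      exact sub_nonneg.2 (hle s hs.le)
  have := hmono self_mem_Ici ht ht
  simp only at this
  linarith

lemma tendsto_div_mul_add_const {α : Type*} {l : Filter α} {F : α → ℝ}
    (hF : Tendsto F l atTop) {k : ℝ} (hk : k ≠ 0) (C : ℝ) :
    Tendsto (fun t => F t / (k * F t + C)) l (𝓝 k⁻¹) := by
  have h : Tendsto (fun t => (k + C * (F t)⁻¹)⁻¹) l (𝓝 k⁻¹) := by
    simpa using (tendsto_const_nhds.add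
      (tendsto_const_nhds.mul (tendsto_inv_atTop_zero.comp hF))).inv₀ (by simpa using hk)
  refine h.congr' ?_
  filter_upwards [hF.eventually_gt_atTop 0] with t ht
  field_simp

lemma tendsto_integral_atTop_of_monotoneOn {f : ℝ → ℝ} (hmono : MonotoneOn f (Ici 0))
    (hf0 : 0 < f 0) : Tendsto (fun t => ∫ s in (0:ℝ)..t, f s) atTop atTop := by
  refine tendsto_atTop_mono' atTop ?_ (tendsto_id.const_mul_atTop hf0)
  filter_upwards [eventually_ge_atTop 0] with t ht
  have hint : IntervalIntegrable f volume 0 t :=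
    (hmono.mono (by rw [uIcc_of_le ht]; exact Icc_subset_Ici_self)).intervalIntegrable
  simpa [mul_comm] using integral_mono_on ht intervalIntegrable_const hint
    (fun s hs => hmono self_mem_Ici hs.1 hs.1)

lemma hasDerivAt_integral_of_continuousOn_Ici {f : ℝ → ℝ} (hf : ContinuousOn f (Ici 0))
    {t : ℝ} (ht : 0 < t) : HasDerivAt (fun u => ∫ s in (0:ℝ)..u, f s) (f t) t :=
  integral_hasDerivAt_right
    (hf.mono (by rw [uIcc_of_le ht.le]; exact Icc_subset_Ici_self)).intervalIntegrable
    ((hf.mono Ioi_subset_Ici_self).stronglyMeasurableAtFilter isOpen_Ioi t ht)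
    (hf.continuousAt (Ici_mem_nhds ht))

lemma inv_le_liminf_deriv_mul_div_sq {f f' f'' F : ℝ → ℝ} {k : ℝ} (hk : 0 < k)
    (hf' : ∀ᶠ t in atTop, HasDerivAt f (f' t) t)
    (hf'' : ∀ᶠ t in atTop, HasDerivAt f' (f'' t) t)
    (hF' : ∀ᶠ t in atTop, HasDerivAt F (f t) t)
    (hfpos : ∀ᶠ t in atTop, 0 < f t) (hf'pos : ∀ᶠ t in atTop, 0 < f' t)
    (hFtop : Tendsto F atTop atTop)
    (hratio : ∀ᶠ t in atTop, 2 - k ≤ f t * f'' t / f' t ^ 2) :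
    ((k⁻¹ : ℝ) : EReal) ≤ liminf (fun t => ((f' t * F t / f t ^ 2 : ℝ) : EReal)) atTop := by
  obtain ⟨T, hT⟩ := eventually_atTop.1
    (hf'.and <| hf''.and <| hF'.and <| hfpos.and <| hf'pos.and hratio)
  obtain ⟨C, hC⟩ : ∃ C, ∀ t ≥ T, f t ^ 2 / f' t ≤ k * F t + C := by
    refine ⟨f T ^ 2 / f' T - k * F T, fun t ht => ?_⟩
    have := sub_le_mul_sub_of_hasDerivAt_le (k := k)
      (fun s hs => hasDerivAt_sq_div_deriv (hT s hs).1 (hT s hs).2.1 (hT s hs).2.2.2.2.1.ne')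
      (fun s hs => (hT s hs).2.2.1)
      (fun s hs => by nlinarith [(hT s hs).2.2.2.1, (hT s hs).2.2.2.2.2]) ht
    linarith
  have hlower : ∀ᶠ t in atTop, F t / (k * F t + C) ≤ f' t * F t / f t ^ 2 := by
    filter_upwards [eventually_ge_atTop T, hFtop.eventually_ge_atTop 0] with t ht hFt
    obtain ⟨-, -, -, hft, hf't, -⟩ := hT t ht
    calc F t / (k * F t + C)
        ≤ F t / (f t ^ 2 / f' t) := div_le_div_of_nonneg_left hFt (by positivity) (hC t ht)
      _ = f' t * F t / f t ^ 2 := by rw [div_div_eq_mul_div, mul_comm]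
  have hlim :=
    (continuous_coe_real_ereal.tendsto _).comp (tendsto_div_mul_add_const hFtop hk.ne' C)
  rw [← hlim.liminf_eq]
  exact liminf_le_liminf (hlower.mono fun t ht => EReal.coe_le_coe_iff.2 ht)

theorem stmt_4_general (f f' f'' F : ℝ → ℝ) (τ : ℝ)
    (hf' : ∀ t ∈ Set.Ici (0:ℝ), HasDerivAt f (f' t) t)
    (hf'' : ∀ t ∈ Set.Ici (0:ℝ), HasDerivAt f' (f'' t) t)
    (hmono : MonotoneOn f (Set.Ici 0))
    (hf'pos : ∀ t ≥ (0:ℝ), 0 < f' t)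
    (hf0 : 0 < f 0)
    (hF : ∀ t, F t = ∫ s in (0:ℝ)..t, f s)
    (hliminf :
      Filter.liminf (fun t => ((f t * f'' t / (f' t) ^ 2 : ℝ) : EReal)) atTop = (τ : EReal))
    (hτpos : 0 < τ) (hτ2 : τ < 2) :
    ((1 / (2 - τ) : ℝ) : EReal) ≤
        Filter.liminf (fun t => ((f' t * F t / (f t) ^ 2 : ℝ) : EReal)) atTop ∧
      (1/2 : ℝ) < 1 / (2 - τ) := by
  have h2τ : 0 < 2 - τ := by linarith
  have hcont : ContinuousOn f (Ici 0) := fun t ht => (hf' t ht).continuousAt.continuousWithinAt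
  obtain rfl : F = fun t => ∫ s in (0:ℝ)..t, f s := funext hF
  have key : ∀ k > 2 - τ, ((k⁻¹ : ℝ) : EReal) ≤
      liminf (fun t => ((f' t * (∫ s in (0:ℝ)..t, f s) / f t ^ 2 : ℝ) : EReal)) atTop := by
    intro k hk
    refine inv_le_liminf_deriv_mul_div_sq (by linarith) (eventually_ge_atTop 0 |>.mono hf')
      (eventually_ge_atTop 0 |>.mono hf'')
      (eventually_gt_atTop 0 |>.mono fun t => hasDerivAt_integral_of_continuousOn_Ici hcont)
      (eventually_ge_atTop (0 : ℝ) |>.mono fun t ht => hf0.trans_le (hmono self_mem_Ici ht ht))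
      (eventually_ge_atTop 0 |>.mono hf'pos) (tendsto_integral_atTop_of_monotoneOn hmono hf0) ?_
    have hlt : ((2 - k : ℝ) : EReal) <
        liminf (fun t => ((f t * f'' t / f' t ^ 2 : ℝ) : EReal)) atTop := by
      rw [hliminf]
      exact EReal.coe_lt_coe_iff.2 (by linarith)
    exact (eventually_lt_of_lt_liminf hlt).mono fun t ht => (EReal.coe_lt_coe_iff.1 ht).le
  have hinv :
      Tendsto (fun k : ℝ => ((k⁻¹ : ℝ) : EReal)) (𝓝[>] (2 - τ)) (𝓝 (((2 - τ)⁻¹ : ℝ))) :=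
    (continuous_coe_real_ereal.tendsto _).comp
      ((continuousAt_inv₀ h2τ.ne').tendsto.mono_left nhdsWithin_le_nhds)
  refine ⟨?_, ?_⟩
  · rw [one_div]
    exact le_of_tendsto hinv (eventually_nhdsWithin_of_forall key)
  · rw [div_lt_div_iff₀ two_pos h2τ]
    linarith

/-- If `f` satisfies (H), is C² and convex (`f'` nondecreasing) with `f' > 0`, and
`τ₋ := liminf_{t→∞} f(t)f''(t)/f'(t)²` satisfies `0 < τ₋ < 2`, then
`liminf_{t→∞} f'(t)F(t)/f(t)² ≥ 1/(2 − τ₋) > 1/2`, where `F(t) = ∫₀^t f(s) ds`.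
Liminfs are taken in `EReal` so that they are well-defined. -/
theorem stmt_4 (f f' f'' F : ℝ → ℝ) (τ : ℝ)
    (hf' : ∀ t ∈ Set.Ici (0:ℝ), HasDerivAt f (f' t) t)
    (hf'' : ∀ t ∈ Set.Ici (0:ℝ), HasDerivAt f' (f'' t) t)
    (hf''cont : ContinuousOn f'' (Set.Ici 0))
    (hmono : MonotoneOn f (Set.Ici 0))
    (hconv : MonotoneOn f' (Set.Ici 0))
    (hf'pos : ∀ t ≥ (0:ℝ), 0 < f' t)
    (hf0 : 0 < f 0)
    (hsuper : Tendsto (fun t => f t / t) atTop atTop)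
    (hF : ∀ t, F t = ∫ s in (0:ℝ)..t, f s)
    (hliminf :
      Filter.liminf (fun t => ((f t * f'' t / (f' t) ^ 2 : ℝ) : EReal)) atTop = (τ : EReal))
    (hτpos : 0 < τ) (hτ2 : τ < 2) :
    ((1 / (2 - τ) : ℝ) : EReal) ≤
        Filter.liminf (fun t => ((f' t * F t / (f t) ^ 2 : ℝ) : EReal)) atTop ∧
      (1/2 : ℝ) < 1 / (2 - τ) :=
  stmt_4_general f f' f'' F τ hf' hf'' hmono hf'pos hf0 hF hliminf hτpos hτ2
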